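/- arXiv:1408.1597 — 2 statements merged into one kernel-verified Lean document; each statement's English description precedes it below -/
import Mathlib

section
/- If the positive integer n satisfies n ≢ 1, 2, 5 (mod 8), then c₄(4n) ≡ c₄(n) (mod 4). Equivalently, the number of ordered quadruples (x, y, z, w) of odd positive integers with x² + y² + z² + w² = 4n is divisible by 4. -/
/-- `sqRep k n` is the number of ordered `k`-tuples `(x₁, …, x_k)` of positive integers
with `x₁² + ⋯ + x_k² = n`. -/
noncomputable def sqRep (k n : ℕ) : ℕ :=
  Nat.card {v : Fin k → ℕ+ // ∑ i, (v i : ℕ) ^ 2 = n}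

/-!
Since squares are `0` or `1` mod 4, the four entries of a representation of `4n` are all even
or all odd. The even ones are exactly twice the representations of `n`. On the odd ones,
`ℤ/4ℤ` acts by cyclically rotating the coordinates, and this action is free: a representation
fixed by a nontrivial rotation is fixed by the rotation by 2, so it has the shape
`(x, y, x, y)` with `x, y` odd, and then `4n = 2(x² + y²) ≡ 4 (mod 16)`, i.e. `n ≡ 1 (mod 4)`.
-/

theorem Nat.sq_mod_four_eq_mod_two (x : ℕ) : x ^ 2 % 4 = x % 2 := by
  rcases Nat.even_or_odd' x with ⟨k, rfl | rfl⟩ <;> ring_nf <;> omega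

theorem Nat.sq_mod_eight_of_odd {x : ℕ} (hx : Odd x) : x ^ 2 % 8 = 1 := by
  obtain ⟨k, rfl⟩ := hx
  obtain ⟨m, hm⟩ := Nat.even_mul_succ_self k
  have : (2 * k + 1) ^ 2 = 4 * (k * (k + 1)) + 1 := by ring
  omega

theorem even_or_odd_of_four_dvd_sum_sq {v : Fin 4 → ℕ} (h : 4 ∣ ∑ i, v i ^ 2) :
    (∀ i, Even (v i)) ∨ (∀ i, Odd (v i)) := by
  have hsq := Nat.sq_mod_four_eq_mod_two
  have hpar : ∀ i, v i % 2 = v 0 % 2 := by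
    rw [Fin.sum_univ_four] at h
    have := hsq (v 0); have := hsq (v 1); have := hsq (v 2); have := hsq (v 3)
    intro i
    fin_cases i <;> simp only [Fin.zero_eta, Fin.mk_one, Fin.reduceFinMk] <;> omega
  simp only [Nat.even_iff, Nat.odd_iff, hpar]
  exact Nat.mod_two_eq_zero_or_one _ |>.imp (fun h _ ↦ h) (fun h _ ↦ h)

theorem sum_sq_mod_sixteen_of_odd {v : Fin 4 → ℕ} (hodd : ∀ i, Odd (v i))
    (h02 : v 2 = v 0) (h13 : v 3 = v 1) : (∑ i, v i ^ 2) % 16 = 4 := by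
  have h0 := Nat.sq_mod_eight_of_odd (hodd 0)
  have h1 := Nat.sq_mod_eight_of_odd (hodd 1)
  rw [Fin.sum_univ_four, h02, h13]
  omega

theorem AddAction.card_dvd_ncard_of_free {G X : Type*} [AddGroup G] [AddAction G X] {s : Set X}
    (hs : ∀ g : G, ∀ x ∈ s, g +ᵥ x ∈ s) (hfree : ∀ g : G, ∀ x ∈ s, g +ᵥ x = x → g = 0) :
    Nat.card G ∣ s.ncard := by
  let p : SubAddAction G X := ⟨s, fun g _ hx ↦ hs g _ hx⟩
  have hstab : ∀ x : p, AddAction.stabilizer G x = ⊥ := fun x ↦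
    (AddSubgroup.eq_bot_iff_forall _).2 fun g hg ↦
      hfree g x x.2 (congrArg Subtype.val (AddAction.mem_stabilizer_iff.1 hg))
  rw [← Nat.card_coe_set_eq]
  exact ⟨_, (Nat.card_congr (AddAction.selfEquivOrbitsQuotientProd hstab)).trans
    (by rw [Nat.card_prod, mul_comm])⟩

namespace DomAddAct

theorem sum_vadd {G M : Type*} [AddGroup G] [Fintype G] [AddCommMonoid M] (c : Gᵈᵃᵃ)
    (v : G → M) : ∑ i, (c +ᵥ v) i = ∑ i, v i := by
  simp only [vadd_apply, vadd_eq_add]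
  exact Equiv.sum_comp (Equiv.addLeft _) v

/-- Every nontrivial subgroup of `ℤ/4ℤ` contains `2`. -/
theorem mk_two_vadd_eq_of_vadd_eq {α : Type*} {v : Fin 4 → α} {c : (Fin 4)ᵈᵃᵃ} (hc : c ≠ 0)
    (h : c +ᵥ v = v) : mk (2 : Fin 4) +ᵥ v = v := by
  have h2 : (c + c) +ᵥ v = v := by rw [add_vadd, h, h]
  obtain ⟨d, rfl⟩ := mk.surjective c
  have hd : d ≠ 0 := by rintro rfl; exact hc rfl
  obtain rfl | hdd : d = 2 ∨ d + d = 2 :=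
    (by decide : ∀ d : Fin 4, d ≠ 0 → d = 2 ∨ d + d = 2) d hd
  · exact h
  · rwa [← mk_add, hdd] at h2

end DomAddAct

def sqRepSet (k n : ℕ) : Set (Fin k → ℕ+) := {v | ∑ i, (v i : ℕ) ^ 2 = n}

theorem sqRep_eq_ncard (k n : ℕ) : sqRep k n = (sqRepSet k n).ncard :=
  Nat.card_coe_set_eq _

theorem finite_sqRepSet (k n : ℕ) : (sqRepSet k n).Finite := by
  refine (Set.finite_Icc 1 fun _ ↦ n.toPNat').subset fun v hv ↦ ⟨fun _ ↦ one_le, fun i ↦ ?_⟩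
  have hle : (v i : ℕ) ^ 2 ≤ n :=
    hv ▸ Finset.single_le_sum (f := fun j ↦ (v j : ℕ) ^ 2) (fun _ _ ↦ Nat.zero_le _)
      (Finset.mem_univ i)
  have hvn : (v i : ℕ) ≤ n := (Nat.le_self_pow two_ne_zero _).trans hle
  rwa [← PNat.coe_le_coe, Nat.toPNat'_coe, if_pos ((v i).pos.trans_le hvn)]

theorem sqRepSet_four_mul_inter_even (k n : ℕ) :
    sqRepSet k (4 * n) ∩ {v | ∀ i, Even (v i : ℕ)} = (fun u i ↦ 2 * u i) '' sqRepSet k n := by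
  have hsum : ∀ u : Fin k → ℕ+, ∑ i, ((2 * u i : ℕ+) : ℕ) ^ 2 = 4 * ∑ i, (u i : ℕ) ^ 2 := by
    intro u
    simp only [PNat.mul_coe, PNat.val_ofNat, mul_pow, Finset.mul_sum]
    norm_num
  ext v
  constructor
  · rintro ⟨hv, heven⟩
    have hhalf : ∀ i, ∃ u : ℕ+, v i = 2 * u := fun i ↦ by
      obtain ⟨r, hr⟩ := heven i
      refine ⟨⟨r, by have := (v i).pos; omega⟩, PNat.eq ?_⟩
      change (v i : ℕ) = 2 * r
      omega
    choose u hu using hhalf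
    obtain rfl : v = fun i ↦ 2 * u i := funext hu
    refine ⟨u, ?_, rfl⟩
    have : 4 * ∑ i, (u i : ℕ) ^ 2 = 4 * n := (hsum u).symm.trans hv
    exact Nat.eq_of_mul_eq_mul_left (by norm_num) this
  · rintro ⟨u, hu, rfl⟩
    exact ⟨(hsum u).trans (congrArg _ hu), fun i ↦ by simp⟩

/-- `(Fin 4)ᵈᵃᵃ` acts on `Fin 4 → ℕ+` by rotating the coordinates. -/
theorem four_dvd_ncard_sqRepSet_inter_odd {m : ℕ} (hm : m % 16 ≠ 4) :
    4 ∣ (sqRepSet 4 m ∩ {v | ∀ i, Odd (v i : ℕ)}).ncard := by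
  have hcard : Nat.card (Fin 4)ᵈᵃᵃ = 4 := by simp [Nat.card_congr DomAddAct.mk.symm]
  refine (dvd_of_eq hcard.symm).trans
    (AddAction.card_dvd_ncard_of_free (fun c v ⟨hv, hodd⟩ ↦ ⟨?_, fun _ ↦ hodd _⟩) ?_)
  · exact (DomAddAct.sum_vadd c fun i ↦ (v i : ℕ) ^ 2).trans hv
  · rintro c v ⟨hv, hodd⟩ hc
    by_contra hc0
    have h2 := congrFun (DomAddAct.mk_two_vadd_eq_of_vadd_eq hc0 hc)
    simp only [DomAddAct.vadd_apply, Equiv.symm_apply_apply, vadd_eq_add] at h2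
    have := sum_sq_mod_sixteen_of_odd (v := fun i ↦ (v i : ℕ)) hodd
      (congrArg _ (h2 0)) (congrArg _ (h2 1))
    exact hm (hv ▸ this)

theorem sqRep_four_mul (n : ℕ) :
    sqRep 4 (4 * n) = sqRep 4 n + (sqRepSet 4 (4 * n) ∩ {v | ∀ i, Odd (v i : ℕ)}).ncard := by
  set S := sqRepSet 4 (4 * n)
  set E := {v : Fin 4 → ℕ+ | ∀ i, Even (v i : ℕ)}
  set O := {v : Fin 4 → ℕ+ | ∀ i, Odd (v i : ℕ)}
  have hcover : S = S ∩ E ∪ S ∩ O := by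
    rw [← Set.inter_union_distrib_left, Set.inter_eq_left.2]
    intro v hv
    exact even_or_odd_of_four_dvd_sum_sq (v := fun i ↦ (v i : ℕ)) ⟨n, hv⟩
  have hdisj : Disjoint (S ∩ E) (S ∩ O) := Set.disjoint_left.2 fun v hE hO ↦
    Nat.not_even_iff_odd.2 (hO.2 0) (hE.2 0)
  have hinj : Function.Injective fun (u : Fin 4 → ℕ+) i ↦ 2 * u i :=
    fun u w h ↦ funext fun i ↦ mul_left_cancel (congrFun h i)
  calc sqRep 4 (4 * n) = (S ∩ E).ncard + (S ∩ O).ncard := by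
        rw [sqRep_eq_ncard, ← Set.ncard_union_eq hdisj ((finite_sqRepSet _ _).inter_of_left _)
          ((finite_sqRepSet _ _).inter_of_left _), ← hcover]
    _ = sqRep 4 n + (S ∩ O).ncard := by
        rw [sqRepSet_four_mul_inter_even, Set.ncard_image_of_injective _ hinj, sqRep_eq_ncard]

theorem c4_four_mul_mod_four_general (n : ℕ)
    (h1 : n % 8 ≠ 1) (h5 : n % 8 ≠ 5) :
    sqRep 4 (4 * n) ≡ sqRep 4 n [MOD 4] := by
  obtain ⟨t, ht⟩ := four_dvd_ncard_sqRepSet_inter_odd (m := 4 * n) (by omega)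
  rw [Nat.ModEq, sqRep_four_mul, ht, Nat.add_mul_mod_self_left]

theorem c4_four_mul_mod_four (n : ℕ) (hn : 0 < n)
    (h1 : n % 8 ≠ 1) (h2 : n % 8 ≠ 2) (h5 : n % 8 ≠ 5) :
    sqRep 4 (4 * n) ≡ sqRep 4 n [MOD 4] :=
  c4_four_mul_mod_four_general n h1 h5
end

section
/- If the positive integer n satisfies n ≡ 0 (mod 4), then c₄(4n) ≡ c₄(n) (mod 8), c₅(4n) ≡ c₅(n) (mod 4), and c₆(4n) ≡ c₆(n) (mod 2). -/
open Function MulAction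

theorem Nat.sq_mod_sixteen_cases (a : ℕ) :
    2 ∣ a ∧ (a ^ 2 % 16 = 0 ∨ a ^ 2 % 16 = 4) ∨ ¬2 ∣ a ∧ (a ^ 2 % 16 = 1 ∨ a ^ 2 % 16 = 9) := by
  have h := Nat.mod_lt a (show 16 > 0 by norm_num)
  have h2 : 2 ∣ a ↔ 2 ∣ a % 16 := by omega
  rw [h2, Nat.pow_mod]
  interval_cases a % 16 <;> simp

theorem Equiv.Perm.dvd_card_of_minimalPeriod_eq {α : Type*} [Finite α] (τ : Equiv.Perm α)
    {n : ℕ} (h : ∀ x, minimalPeriod τ x = n) : n ∣ Nat.card α := by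
  have e : α ≃ orbitRel.Quotient (Subgroup.zpowers τ) α × ZMod n :=
    (selfEquivSigmaOrbits (Subgroup.zpowers τ) α).trans <|
      (Equiv.sigmaCongrRight fun q : orbitRel.Quotient (Subgroup.zpowers τ) α =>
        (orbitZPowersEquiv τ q.out).trans (ZMod.ringEquivCongr (h q.out)).toEquiv).trans <|
      Equiv.sigmaEquivProd _ _
  rw [Nat.card_congr e, Nat.card_prod, Nat.card_zmod]
  exact Dvd.intro_left _ rfl

theorem Equiv.Perm.pow_dvd_card {α : Type*} [Finite α] {p m : ℕ} [hp : Fact p.Prime]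
    (τ : Equiv.Perm α) (hτ : τ ^ p ^ (m + 1) = 1) (hfree : ∀ x, (τ ^ p ^ m) x ≠ x) :
    p ^ (m + 1) ∣ Nat.card α := by
  refine τ.dvd_card_of_minimalPeriod_eq fun x => ?_
  have hdvd : minimalPeriod τ x ∣ p ^ (m + 1) := by
    apply IsPeriodicPt.minimalPeriod_dvd
    simp [IsPeriodicPt, IsFixedPt, ← Equiv.Perm.coe_pow, hτ]
  obtain ⟨j, hj, hjx⟩ := (Nat.dvd_prime_pow hp.out).mp hdvd
  rcases hj.lt_or_eq with hlt | rfl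
  · refine absurd ?_ (hfree x)
    have : IsPeriodicPt τ (p ^ m) x := by
      rw [isPeriodicPt_iff_minimalPeriod_dvd, hjx]
      exact pow_dvd_pow p (Nat.lt_succ_iff.mp hlt)
    rwa [Equiv.Perm.coe_pow]
  · exact hjx

theorem pow_dvd_ncard_of_comp_mem_iff {ι β : Type*} {s : Set (ι → β)} (hs : s.Finite)
    (σ : Equiv.Perm ι) (hσs : ∀ v, v ∘ σ ∈ s ↔ v ∈ s) {p m : ℕ} [Fact p.Prime]
    (hσ : σ ^ p ^ (m + 1) = 1) (hfree : ∀ v ∈ s, v ∘ ⇑(σ ^ p ^ m) ≠ v) :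
    p ^ (m + 1) ∣ s.ncard := by
  have := hs.to_subtype
  let τ : Equiv.Perm s := (toPerm (DomMulAct.mk σ) : Equiv.Perm (ι → β)).subtypePerm (hσs ·)
  have hτ (j : ℕ) (v : s) : ((τ ^ j) v : ι → β) = v ∘ ⇑(σ ^ j) := by
    simp only [τ, Equiv.Perm.subtypePerm_pow, Equiv.Perm.subtypePerm_apply, ← toPermHom_apply,
      ← map_pow, ← DomMulAct.mk_pow]
    rfl
  refine τ.pow_dvd_card (Equiv.ext fun v => Subtype.ext ?_) fun v h => hfree v v.2 ?_
  · rw [hτ, hσ]; rfl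
  · rw [← hτ, h]

theorem range_two_mul_eq_setOf_two_dvd {ι : Type*} :
    Set.range (fun (w : ι → ℕ+) i => 2 * w i) = {v | ∀ i, 2 ∣ (v i : ℕ)} := by
  ext v
  refine ⟨?_, fun hv => ⟨fun i => ⟨(v i : ℕ) / 2, ?_⟩, funext fun i => PNat.eq ?_⟩⟩
  · rintro ⟨w, rfl⟩ i
    exact Dvd.intro _ (PNat.mul_coe 2 (w i)).symm
  · have := (v i).pos; have := hv i; omega
  · exact Nat.mul_div_cancel' (hv i)

def sumSqSet (ι : Type*) [Fintype ι] (N : ℕ) : Set (ι → ℕ+) := {v | ∑ i, (v i : ℕ) ^ 2 = N}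

def oddSumSqSet (ι : Type*) [Fintype ι] (N : ℕ) : Set (ι → ℕ+) :=
  sumSqSet ι N \ {v | ∀ i, 2 ∣ (v i : ℕ)}

theorem sqRep_eq_ncard_s18 (k N : ℕ) : sqRep k N = (sumSqSet (Fin k) N).ncard := rfl

section SumSq

variable {ι : Type*} [Fintype ι]

theorem finite_sumSqSet (N : ℕ) : (sumSqSet ι N).Finite := by
  refine (Set.Finite.pi' fun _ => (Set.finite_Iic N).preimage PNat.coe_injective.injOn).subset ?_
  intro v hv i
  calc (v i : ℕ) ≤ (v i : ℕ) ^ 2 := Nat.le_self_pow two_ne_zero _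
    _ ≤ ∑ j, (v j : ℕ) ^ 2 :=
      Finset.single_le_sum (f := fun j => (v j : ℕ) ^ 2) (fun j _ => Nat.zero_le _)
        (Finset.mem_univ i)
    _ = N := hv

theorem preimage_two_mul_sumSqSet (n : ℕ) :
    (fun (w : ι → ℕ+) i => 2 * w i) ⁻¹' sumSqSet ι (4 * n) = sumSqSet ι n := by
  ext w
  simp only [sumSqSet, Set.mem_preimage, Set.mem_ofPred_eq, PNat.mul_coe, PNat.val_ofNat, mul_pow,
    ← Finset.mul_sum]
  omega

theorem ncard_sumSqSet_four_mul (n : ℕ) :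
    (sumSqSet ι (4 * n)).ncard = (sumSqSet ι n).ncard + (oddSumSqSet ι (4 * n)).ncard := by
  rw [oddSumSqSet, ← Set.ncard_inter_add_ncard_sdiff_eq_ncard _ _ (finite_sumSqSet _),
    ← range_two_mul_eq_setOf_two_dvd, ← Set.image_preimage_eq_inter_range,
    preimage_two_mul_sumSqSet,
    Set.ncard_image_of_injective _ fun v w h => funext fun i => mul_left_cancel (congrFun h i)]

theorem comp_mem_oddSumSqSet_iff (σ : Equiv.Perm ι) {N : ℕ} {v : ι → ℕ+} :
    v ∘ σ ∈ oddSumSqSet ι N ↔ v ∈ oddSumSqSet ι N := by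
  simp only [oddSumSqSet, sumSqSet, Set.mem_sdiff, Set.mem_ofPred_eq, comp_apply]
  rw [Equiv.sum_comp σ (fun i => (v i : ℕ) ^ 2),
    ← σ.surjective.forall (p := fun i => 2 ∣ (v i : ℕ))]

end SumSq

theorem oddSumSqSet_fin_four_eq_empty {N : ℕ} (hN : 16 ∣ N) : oddSumSqSet (Fin 4) N = ∅ := by
  refine Set.eq_empty_of_forall_notMem fun v ⟨hv, hodd⟩ => hodd fun i => ?_
  simp only [sumSqSet, Set.mem_ofPred_eq, Fin.sum_univ_four] at hv
  have := (v 0 : ℕ).sq_mod_sixteen_cases; have := (v 1 : ℕ).sq_mod_sixteen_cases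
  have := (v 2 : ℕ).sq_mod_sixteen_cases; have := (v 3 : ℕ).sq_mod_sixteen_cases
  fin_cases i <;> dsimp <;> omega

theorem four_dvd_ncard_oddSumSqSet_fin_five {N : ℕ} (hN : 16 ∣ N) :
    4 ∣ (oddSumSqSet (Fin 5) N).ncard := by
  refine pow_dvd_ncard_of_comp_mem_iff (p := 2) (m := 1) (finite_sumSqSet N).sdiff c[1, 2, 3, 4]
    (fun v => comp_mem_oddSumSqSet_iff _) (by decide) ?_
  rintro v ⟨hv, hodd⟩ h
  have h31 : v 3 = v 1 := congrFun h 1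
  have h42 : v 4 = v 2 := congrFun h 2
  simp only [sumSqSet, Set.mem_ofPred_eq, Fin.sum_univ_five, h31, h42] at hv
  refine hodd fun i => ?_
  have := (v 0 : ℕ).sq_mod_sixteen_cases; have := (v 1 : ℕ).sq_mod_sixteen_cases
  have := (v 2 : ℕ).sq_mod_sixteen_cases
  fin_cases i <;> simp [h31, h42] <;> omega

theorem two_dvd_ncard_oddSumSqSet_fin_six {N : ℕ} (hN : 16 ∣ N) :
    2 ∣ (oddSumSqSet (Fin 6) N).ncard := by
  refine pow_dvd_ncard_of_comp_mem_iff (p := 2) (m := 0) (finite_sumSqSet N).sdiff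
    (c[0, 1] * c[2, 3] * c[4, 5]) (fun v => comp_mem_oddSumSqSet_iff _) (by decide) ?_
  rintro v ⟨hv, hodd⟩ h
  have h10 : v 1 = v 0 := congrFun h 0
  have h32 : v 3 = v 2 := congrFun h 2
  have h54 : v 5 = v 4 := congrFun h 4
  simp only [sumSqSet, Set.mem_ofPred_eq, Fin.sum_univ_six, h10, h32, h54] at hv
  refine hodd fun i => ?_
  have := (v 0 : ℕ).sq_mod_sixteen_cases; have := (v 2 : ℕ).sq_mod_sixteen_cases
  have := (v 4 : ℕ).sq_mod_sixteen_cases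
  fin_cases i <;> simp [h10, h32, h54] <;> omega

theorem c456_four_mul_general (n : ℕ) (h4 : n % 4 = 0) :
    sqRep 4 (4 * n) ≡ sqRep 4 n [MOD 8] ∧
      sqRep 5 (4 * n) ≡ sqRep 5 n [MOD 4] ∧
        sqRep 6 (4 * n) ≡ sqRep 6 n [MOD 2] := by
  have h16 : 16 ∣ 4 * n := by omega
  simp only [sqRep_eq_ncard_s18, ncard_sumSqSet_four_mul, oddSumSqSet_fin_four_eq_empty h16,
    Set.ncard_empty, add_zero]
  exact ⟨rfl, Nat.add_modEq_left_iff.2 (four_dvd_ncard_oddSumSqSet_fin_five h16),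
    Nat.add_modEq_left_iff.2 (two_dvd_ncard_oddSumSqSet_fin_six h16)⟩

theorem c456_four_mul (n : ℕ) (hn : 0 < n) (h4 : n % 4 = 0) :
    sqRep 4 (4 * n) ≡ sqRep 4 n [MOD 8] ∧
      sqRep 5 (4 * n) ≡ sqRep 5 n [MOD 4] ∧
        sqRep 6 (4 * n) ≡ sqRep 6 n [MOD 2] :=
  c456_four_mul_general n h4
end
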